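/- Let $\kappa>0$ and set $\tau=2e\max\{\kappa,2\}$. The function $w(y)=\kappa y+\frac{\tau}{y}e^{-y^2/4}$ satisfies $\mathcal J_1 w(y)\le 0$ for every $y\in(0,\infty)$. -/

import Mathlib

/-
Write `E = e^{-y²/4}`. Since `w'' = τE (1/(2y) + y/4 + 2/y³)` and `(y/2) w' - w/2 = -τE (1/y + y/4)`,
`𝒥₁ w ≤ 0` amounts to `1/(2y) + y/4 + 2/y³ ≤ (1/y + y/4)(1 + w'²)`. For `y ≥ 2` the term `2/y³` is
absorbed by `1/(2y)`. For `y < 2` we have `E ≥ e⁻¹`, so the choice of `τ` gives `τE ≥ 2 max{κ,2}`,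
whence `w' ≤ -4/y²` and `w'² ≥ 16/y⁴ ≥ 2/y²`, which is enough.
-/

/-- The one-dimensional self-expander operator
`𝒥₁ u (y) = u''/(1+u'^2) + (y/2) u' - u/2`. -/
noncomputable def J1 (u : ℝ → ℝ) (y : ℝ) : ℝ :=
  deriv (deriv u) y / (1 + (deriv u y) ^ 2) + y / 2 * deriv u y - u y / 2

open Real Filter Topology

lemma J1_eq_of_hasDerivAt {u u' : ℝ → ℝ} {y u'' : ℝ}
    (hu : ∀ᶠ t in 𝓝 y, HasDerivAt u (u' t) t) (hu' : HasDerivAt u' u'' y) :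
    J1 u y = u'' / (1 + u' y ^ 2) + y / 2 * u' y - u y / 2 := by
  have hderiv : deriv u =ᶠ[𝓝 y] u' := hu.mono fun t ht => ht.deriv
  rw [J1, hderiv.deriv_eq, hu'.deriv, hu.self_of_nhds.deriv]

lemma hasDerivAt_exp_neg_sq_div_four (x : ℝ) :
    HasDerivAt (fun t => exp (-(t ^ 2) / 4)) (exp (-(x ^ 2) / 4) * -(x / 2)) x := by
  have hexponent : HasDerivAt (fun t : ℝ => -(t ^ 2) / 4) (-(x / 2)) x := by
    refine ((hasDerivAt_pow 2 x).neg.div_const 4).congr_deriv ?_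
    ring
  exact hexponent.exp

noncomputable def expanderBarrier (κ τ y : ℝ) : ℝ :=
  κ * y + τ / y * exp (-(y ^ 2) / 4)

noncomputable def expanderBarrierDeriv (κ τ y : ℝ) : ℝ :=
  κ - τ * exp (-(y ^ 2) / 4) * (1 / y ^ 2 + 1 / 2)

lemma hasDerivAt_expanderBarrier (κ τ : ℝ) {x : ℝ} (hx : x ≠ 0) :
    HasDerivAt (expanderBarrier κ τ) (expanderBarrierDeriv κ τ x) x := by
  have hinv : HasDerivAt (fun t => τ / t) (-(τ / x ^ 2)) x := by
    simpa [div_eq_mul_inv, mul_comm] using (hasDerivAt_inv hx).const_mul τ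
  refine (((hasDerivAt_id x).const_mul κ).add
    (hinv.mul (hasDerivAt_exp_neg_sq_div_four x))).congr_deriv ?_
  simp only [expanderBarrierDeriv]
  field_simp
  ring

lemma hasDerivAt_expanderBarrierDeriv (κ τ : ℝ) {x : ℝ} (hx : x ≠ 0) :
    HasDerivAt (expanderBarrierDeriv κ τ)
      (τ * exp (-(x ^ 2) / 4) * (1 / (2 * x) + x / 4 + 2 / x ^ 3)) x := by
  have hinv : HasDerivAt (fun t : ℝ => 1 / t ^ 2 + 1 / 2) (-(2 * x) / (x ^ 2) ^ 2) x := by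
    simpa [one_div] using ((hasDerivAt_pow 2 x).inv (pow_ne_zero 2 hx)).add_const (1 / 2 : ℝ)
  refine ((hasDerivAt_const x κ).sub
    (((hasDerivAt_exp_neg_sq_div_four x).const_mul τ).mul hinv)).congr_deriv ?_
  field_simp
  ring

lemma J1_expanderBarrier (κ τ : ℝ) {y : ℝ} (hy : y ≠ 0) :
    J1 (expanderBarrier κ τ) y = τ * exp (-(y ^ 2) / 4) *
      ((1 / (2 * y) + y / 4 + 2 / y ^ 3) / (1 + expanderBarrierDeriv κ τ y ^ 2)
        - (1 / y + y / 4)) := by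
  have hnear : ∀ᶠ t in 𝓝 y, HasDerivAt (expanderBarrier κ τ) (expanderBarrierDeriv κ τ t) t :=
    (eventually_ne_nhds hy).mono fun t ht => hasDerivAt_expanderBarrier κ τ ht
  rw [J1_eq_of_hasDerivAt hnear (hasDerivAt_expanderBarrierDeriv κ τ hy)]
  simp only [expanderBarrier, expanderBarrierDeriv]
  field_simp
  ring

lemma expanderBarrierDeriv_le {κ τ y : ℝ} (hy : y ^ 2 ≤ 4) (hτ : τ = 2 * exp 1 * max κ 2) :
    expanderBarrierDeriv κ τ y ≤ -(4 / y ^ 2) := by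
  have hexp : 1 ≤ exp 1 * exp (-(y ^ 2) / 4) := by
    rw [← exp_add]
    exact one_le_exp (by linarith)
  have hτE : 2 * max κ 2 ≤ τ * exp (-(y ^ 2) / 4) := by
    rw [hτ]
    nlinarith [le_max_right κ 2]
  have hinv : 0 ≤ 1 / y ^ 2 := by positivity
  have hmax : 4 * (1 / y ^ 2) ≤ 2 * max κ 2 * (1 / y ^ 2) :=
    mul_le_mul_of_nonneg_right (by linarith [le_max_right κ 2]) hinv
  have hτE' := mul_le_mul_of_nonneg_right hτE hinv
  rw [expanderBarrierDeriv, mul_add, div_eq_mul_one_div 4]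
  linarith [le_max_left κ 2, le_max_right κ 2]

lemma two_div_sq_le_sq_expanderBarrierDeriv {κ τ y : ℝ} (hy : 0 < y) (hy2 : y < 2)
    (hτ : τ = 2 * exp 1 * max κ 2) :
    2 / y ^ 2 ≤ expanderBarrierDeriv κ τ y ^ 2 := by
  have hysq : y ^ 2 < 4 := by nlinarith
  have hW := expanderBarrierDeriv_le hysq.le hτ
  have hfour : 2 / y ^ 2 ≤ (4 / y ^ 2) ^ 2 := by
    rw [div_pow, div_le_div_iff₀ (by positivity) (by positivity)]
    nlinarith [mul_lt_mul_of_pos_left hysq (pow_pos hy 2)]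
  have hsq : (4 / y ^ 2) ^ 2 ≤ (-expanderBarrierDeriv κ τ y) ^ 2 :=
    pow_le_pow_left₀ (by positivity) (by linarith) 2
  rw [neg_sq] at hsq
  linarith

lemma J1_expanderBarrier_nonpos {κ τ y : ℝ} (hτ : 0 ≤ τ) (hy : 0 < y)
    (hW : y < 2 → 2 / y ^ 2 ≤ expanderBarrierDeriv κ τ y ^ 2) :
    J1 (expanderBarrier κ τ) y ≤ 0 := by
  set W := expanderBarrierDeriv κ τ y
  have hB : 0 ≤ 1 / y + y / 4 := by positivity
  have hkey : 1 / (2 * y) + y / 4 + 2 / y ^ 3 ≤ (1 / y + y / 4) * (1 + W ^ 2) := by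
    rcases le_or_gt 2 y with h2 | h2
    · have hcube : 2 / y ^ 3 ≤ 1 / (2 * y) := by
        rw [div_le_div_iff₀ (by positivity) (by positivity)]
        nlinarith [mul_le_mul_of_nonneg_left (by nlinarith : (4 : ℝ) ≤ y ^ 2) hy.le]
      have hsplit : 1 / y = 1 / (2 * y) + 1 / (2 * y) := by field_simp; norm_num
      nlinarith [mul_nonneg hB (sq_nonneg W)]
    · have hexpand : (1 / y + y / 4) * (1 + 2 / y ^ 2)
          = 1 / (2 * y) + y / 4 + 2 / y ^ 3 + 1 / y := by
        field_simp
        ring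
      have hmono : (1 / y + y / 4) * (1 + 2 / y ^ 2) ≤ (1 / y + y / 4) * (1 + W ^ 2) :=
        mul_le_mul_of_nonneg_left (by linarith [hW h2]) hB
      have hpos : 0 < 1 / y := by positivity
      linarith
  rw [J1_expanderBarrier κ τ hy.ne']
  refine mul_nonpos_of_nonneg_of_nonpos (by positivity) (sub_nonpos.mpr ?_)
  exact div_le_of_le_mul₀ (by positivity) hB hkey

theorem stmt2_general (κ : ℝ) (τ : ℝ) (hτ : τ = 2 * Real.exp 1 * max κ 2) :
    ∀ y : ℝ, 0 < y →
      J1 (fun y => κ * y + τ / y * Real.exp (-(y ^ 2) / 4)) y ≤ 0 := by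
  intro y hy
  have hτ_nonneg : 0 ≤ τ := by
    rw [hτ]
    positivity
  exact J1_expanderBarrier_nonpos hτ_nonneg hy
    fun h2 => two_div_sq_le_sq_expanderBarrierDeriv hy h2 hτ

/-- For `κ > 0` and `τ = 2e·max{κ,2}`, the function `w(y) = κ y + (τ/y) e^{-y²/4}` satisfies
`𝒥₁ w (y) ≤ 0` for every `y ∈ (0,∞)`. -/
theorem stmt2 (κ : ℝ) (hκ : 0 < κ) (τ : ℝ) (hτ : τ = 2 * Real.exp 1 * max κ 2) :
    ∀ y : ℝ, 0 < y →
      J1 (fun y => κ * y + τ / y * Real.exp (-(y ^ 2) / 4)) y ≤ 0 :=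
  stmt2_general κ τ hτ
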